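/- arXiv:1611.04032 — 3 statements merged into one kernel-verified Lean document; each statement's English description precedes it below -/
import Mathlib

section
/- Let D ≥ 4, k ≥ 1, and let G be a closed bipartite (D+1)-colored graph with 2k vertices. Then the number of faces with more than two vertices and the maximal number of vertices of a face are bounded linearly in the degree ω(G) and the number F_1(G) of faces with two vertices: specifically, (D−3)·Σ_{s≥2} F_s(G) + D(D+1) ≤ (2(D+1)/(D−1)!)·ω(G) + 2·F_1(G), and every face of G with 2s vertices (s ≥ 2) satisfies s(D−1) + D(D+1) ≤ (D+1) + (2(D+1)/(D−1)!)·ω(G) + 2·F_1(G). -/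
open scoped Classical

noncomputable section

/-- Number of cycles of a permutation of `Fin k`, counting fixed points
as cycles of length 1. -/
def numCycles {k : ℕ} (τ : Equiv.Perm (Fin k)) : ℕ :=
  τ.cycleType.card + (Finset.univ.filter fun i => τ i = i).card

/-- `F^{c₁c₂}(G)`: the number of faces with colors `c₁c₂`, i.e. the number of
cycles of `(σ c₂)⁻¹ * σ c₁` (fixed points counting as cycles of length 1). -/
def faceCount (D k : ℕ) (σ : Fin (D + 1) → Equiv.Perm (Fin k)) (c₁ c₂ : Fin (D + 1)) : ℕ :=
  numCycles ((σ c₂)⁻¹ * σ c₁)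

/-- `F(G)`: total number of faces. -/
def totalFaces (D k : ℕ) (σ : Fin (D + 1) → Equiv.Perm (Fin k)) : ℕ :=
  ∑ p ∈ Finset.univ.filter (fun p : Fin (D + 1) × Fin (D + 1) => p.1 < p.2),
    faceCount D k σ p.1 p.2

/-- The degree `ω(G) := ((D−1)!/2) · (D + (D(D−1)/2)·k − F(G))`. -/
def degree (D k : ℕ) (σ : Fin (D + 1) → Equiv.Perm (Fin k)) : ℚ :=
  ((D - 1).factorial : ℚ) / 2 *
    ((D : ℚ) + (D : ℚ) * ((D : ℚ) - 1) / 2 * (k : ℚ) - (totalFaces D k σ : ℚ))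

/-- `G` is connected: the subgroup generated by the `(σ c')⁻¹ * σ c` acts
transitively on `Fin k`. -/
def Connected (D k : ℕ) (σ : Fin (D + 1) → Equiv.Perm (Fin k)) : Prop :=
  ∀ i j : Fin k, ∃ g ∈ Subgroup.closure
    {g : Equiv.Perm (Fin k) | ∃ c c' : Fin (D + 1), g = (σ c')⁻¹ * σ c}, g i = j

/-- A permutation of `Fin m` which is a single `m`-cycle. -/
def IsFullCycle {m : ℕ} (π : Equiv.Perm (Fin m)) : Prop :=
  π.IsCycle ∧ π.support = Finset.univ

/-- `Φ_π(G) := Σ_{q=0}^{D} F^{π^q(0), π^{q+1}(0)}(G)`, the face count of the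
jacket associated to the `(D+1)`-cycle `π` on the colors. -/
def jacketFaces (D k : ℕ) (σ : Fin (D + 1) → Equiv.Perm (Fin k))
    (π : Equiv.Perm (Fin (D + 1))) : ℕ :=
  ∑ q ∈ Finset.range (D + 1), faceCount D k σ ((π ^ q) 0) ((π ^ (q + 1)) 0)

/-- `g_π(G) := (2 + (D−1)·k − Φ_π(G))/2`, the genus of the jacket of `π`. -/
def jacketGenus (D k : ℕ) (σ : Fin (D + 1) → Equiv.Perm (Fin k))
    (π : Equiv.Perm (Fin (D + 1))) : ℚ :=
  (2 + ((D : ℚ) - 1) * (k : ℚ) - (jacketFaces D k σ π : ℚ)) / 2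

/-- The number of cycles of length `s` of a permutation of `Fin k`
(fixed points counting as cycles of length 1). -/
def numCyclesLen {k : ℕ} (τ : Equiv.Perm (Fin k)) (s : ℕ) : ℕ :=
  if s = 1 then (Finset.univ.filter fun i => τ i = i).card else τ.cycleType.count s

/-- `F_s(G)`: the number of faces of `G` with `2s` vertices. -/
def facesLen (D k : ℕ) (σ : Fin (D + 1) → Equiv.Perm (Fin k)) (s : ℕ) : ℕ :=
  ∑ p ∈ Finset.univ.filter (fun p : Fin (D + 1) × Fin (D + 1) => p.1 < p.2),
    numCyclesLen ((σ p.2)⁻¹ * σ p.1) s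

/-!
For each pair of colors the cycles of `(σ c₂)⁻¹ * σ c₁` partition the `k` black vertices, so
`F₁ + Σ_{s≥2} s·F_s = k·D(D+1)/2`, while `F = F₁ + Σ_{s≥2} F_s`. Substituting both into `ω`
gives `(2(D+1)/(D−1)!)·ω + 2F₁ = D(D+1) + Σ_{s≥2} ((D−1)s − (D+1))·F_s`. Every coefficient
`(D−1)s − (D+1)` with `s ≥ 2` is at least `D − 3`, and is nonnegative once `D ≥ 3`; the first
bound sums the former estimate, the second keeps the single term of a face with `2s` vertices.
-/

open Finset

section Permutation

variable {k : ℕ} (τ : Equiv.Perm (Fin k))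

lemma mem_Icc_of_mem_cycleType {a : ℕ} (ha : a ∈ τ.cycleType) : a ∈ Icc 2 k :=
  mem_Icc.2 ⟨Equiv.Perm.two_le_of_mem_cycleType ha,
    (Equiv.Perm.le_card_support_of_mem_cycleType ha).trans (card_le_univ _ |>.trans_eq
      (Fintype.card_fin k))⟩

lemma numCyclesLen_of_ne_one {s : ℕ} (hs : s ≠ 1) : numCyclesLen τ s = τ.cycleType.count s :=
  if_neg hs

lemma numCyclesLen_eq_zero_of_lt {s : ℕ} (hs : k < s) : numCyclesLen τ s = 0 := by
  rcases eq_or_ne s 1 with rfl | hs1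
  · obtain rfl : k = 0 := by omega
    simp [numCyclesLen]
  · rw [numCyclesLen_of_ne_one τ hs1, Multiset.count_eq_zero]
    intro hmem
    have := (mem_Icc.1 (mem_Icc_of_mem_cycleType τ hmem)).2
    omega

lemma sum_numCyclesLen_Icc : ∑ s ∈ Icc 2 k, numCyclesLen τ s = τ.cycleType.card := by
  rw [sum_congr rfl fun s hs => numCyclesLen_of_ne_one τ (by grind)]
  exact Multiset.sum_count_eq_card fun _ => mem_Icc_of_mem_cycleType τ

lemma sum_mul_numCyclesLen_Icc : ∑ s ∈ Icc 2 k, s * numCyclesLen τ s = #τ.support := by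
  rw [← Equiv.Perm.sum_cycleType,
    sum_multiset_count_of_subset _ _ fun a ha => mem_Icc_of_mem_cycleType τ (by simpa using ha)]
  refine sum_congr rfl fun s hs => ?_
  rw [numCyclesLen_of_ne_one τ (by grind), smul_eq_mul, mul_comm]

lemma numCycles_eq_numCyclesLen_one_add_sum :
    numCycles τ = numCyclesLen τ 1 + ∑ s ∈ Icc 2 k, numCyclesLen τ s := by
  rw [sum_numCyclesLen_Icc, numCycles, add_comm]
  rfl

lemma numCyclesLen_one_add_sum_mul :
    numCyclesLen τ 1 + ∑ s ∈ Icc 2 k, s * numCyclesLen τ s = k := by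
  have hsupport : τ.support = univ.filter fun i => ¬τ i = i := by
    ext i
    simp
  rw [sum_mul_numCyclesLen_Icc, hsupport, numCyclesLen, if_pos rfl,
    card_filter_add_card_filter_not, card_univ, Fintype.card_fin]

end Permutation

section ColoredGraph

variable {D k : ℕ} (σ : Fin (D + 1) → Equiv.Perm (Fin k))

lemma facesLen_eq_zero_of_lt {s : ℕ} (hs : k < s) : facesLen D k σ s = 0 :=
  sum_eq_zero fun _ _ => numCyclesLen_eq_zero_of_lt _ hs

lemma totalFaces_eq_facesLen_one_add_sum :
    totalFaces D k σ = facesLen D k σ 1 + ∑ s ∈ Icc 2 k, facesLen D k σ s := by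
  simp only [totalFaces, faceCount, facesLen, numCycles_eq_numCyclesLen_one_add_sum,
    sum_add_distrib]
  rw [sum_comm]

lemma facesLen_one_add_sum_mul_facesLen :
    (facesLen D k σ 1 : ℚ) + ∑ s ∈ Icc 2 k, (s : ℚ) * facesLen D k σ s =
      k * ((D + 1) * D / 2) := by
  have hpairs : (#{p : Fin (D + 1) × Fin (D + 1) | p.1 < p.2} : ℚ) = (D + 1) * D / 2 := by
    rw [Fintype.card_product_filter_lt, Fintype.card_fin, Nat.cast_choose_two]
    push_cast
    ring
  have hcount : facesLen D k σ 1 + ∑ s ∈ Icc 2 k, s * facesLen D k σ s =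
      k * #{p : Fin (D + 1) × Fin (D + 1) | p.1 < p.2} := by
    simp only [facesLen, mul_sum]
    rw [sum_comm, ← sum_add_distrib, sum_congr rfl fun p _ => numCyclesLen_one_add_sum_mul _,
      sum_const, smul_eq_mul, mul_comm]
  rw [← hpairs]
  exact_mod_cast hcount

lemma degree_mul_add_facesLen_one_eq_sum :
    2 * ((D : ℚ) + 1) / ((D - 1).factorial : ℚ) * degree D k σ + 2 * (facesLen D k σ 1 : ℚ) =
      D * (D + 1) + ∑ s ∈ Icc 2 k, ((D - 1) * (s : ℚ) - (D + 1)) * facesLen D k σ s := by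
  have hfaces : (totalFaces D k σ : ℚ) =
      facesLen D k σ 1 + ∑ s ∈ Icc 2 k, (facesLen D k σ s : ℚ) := by
    exact_mod_cast totalFaces_eq_facesLen_one_add_sum σ
  have hvertices := facesLen_one_add_sum_mul_facesLen σ
  have hfact : ((D - 1).factorial : ℚ) ≠ 0 := by positivity
  simp only [sub_mul, sum_sub_distrib, mul_assoc, ← mul_sum]
  rw [degree, hfaces]
  field_simp
  linear_combination (-(((D : ℚ) - 1) * 2)) * hvertices

end ColoredGraph

theorem large_faces_bounded_general (D k : ℕ) (hD : 4 ≤ D)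
    (σ : Fin (D + 1) → Equiv.Perm (Fin k)) :
    ((D : ℚ) - 3) * (∑ s ∈ Finset.Icc 2 k, (facesLen D k σ s : ℚ))
        + (D : ℚ) * ((D : ℚ) + 1) ≤
      2 * ((D : ℚ) + 1) / ((D - 1).factorial : ℚ) * degree D k σ
        + 2 * (facesLen D k σ 1 : ℚ) ∧
    ∀ s : ℕ, 2 ≤ s → facesLen D k σ s ≠ 0 →
      (s : ℚ) * ((D : ℚ) - 1) + (D : ℚ) * ((D : ℚ) + 1) ≤
        ((D : ℚ) + 1) + 2 * ((D : ℚ) + 1) / ((D - 1).factorial : ℚ) * degree D k σ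
          + 2 * (facesLen D k σ 1 : ℚ) := by
  have hD' : (4 : ℚ) ≤ D := by exact_mod_cast hD
  have hcoeff : ∀ s ∈ Icc 2 k, (D : ℚ) - 3 ≤ (D - 1) * (s : ℚ) - (D + 1) := fun s hs => by
    have : (2 : ℚ) ≤ s := by exact_mod_cast (mem_Icc.1 hs).1
    nlinarith
  have hterm_nonneg : ∀ s ∈ Icc 2 k, 0 ≤ ((D - 1) * (s : ℚ) - (D + 1)) * facesLen D k σ s :=
    fun s hs => mul_nonneg (by linarith [hcoeff s hs]) (Nat.cast_nonneg _)
  have hω := degree_mul_add_facesLen_one_eq_sum σ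
  refine ⟨?_, fun s hs hne => ?_⟩
  · rw [hω, add_comm, mul_sum]
    gcongr _ + ?_
    exact sum_le_sum fun s hs => mul_le_mul_of_nonneg_right (hcoeff s hs) (Nat.cast_nonneg _)
  · have hsk : s ≤ k := by
      by_contra! hks
      exact hne (facesLen_eq_zero_of_lt σ hks)
    have hs_mem : s ∈ Icc 2 k := mem_Icc.2 ⟨hs, hsk⟩
    have hone : (1 : ℚ) ≤ facesLen D k σ s := by exact_mod_cast Nat.one_le_iff_ne_zero.2 hne
    have hterm : (D - 1) * (s : ℚ) - (D + 1) ≤ ((D - 1) * (s : ℚ) - (D + 1)) * facesLen D k σ s :=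
      le_mul_of_one_le_right (by linarith [hcoeff s hs_mem]) hone
    linarith [single_le_sum hterm_nonneg hs_mem]

/-- For `D ≥ 4`, the number of faces with more than two vertices, and the
maximal number of vertices of a face, of a closed bipartite `(D+1)`-colored graph with `2k`
vertices are bounded linearly in the degree `ω(G)` and the number `F₁(G)` of faces with two
vertices:
`(D−3)·Σ_{s≥2} F_s(G) + D(D+1) ≤ (2(D+1)/(D−1)!)·ω(G) + 2·F₁(G)`, and every face with `2s`
vertices (`s ≥ 2`) satisfies
`s(D−1) + D(D+1) ≤ (D+1) + (2(D+1)/(D−1)!)·ω(G) + 2·F₁(G)`. -/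
theorem large_faces_bounded (D k : ℕ) (hD : 4 ≤ D) (hk : 1 ≤ k)
    (σ : Fin (D + 1) → Equiv.Perm (Fin k)) :
    ((D : ℚ) - 3) * (∑ s ∈ Finset.Icc 2 k, (facesLen D k σ s : ℚ))
        + (D : ℚ) * ((D : ℚ) + 1) ≤
      2 * ((D : ℚ) + 1) / ((D - 1).factorial : ℚ) * degree D k σ
        + 2 * (facesLen D k σ 1 : ℚ) ∧
    ∀ s : ℕ, 2 ≤ s → facesLen D k σ s ≠ 0 →
      (s : ℚ) * ((D : ℚ) - 1) + (D : ℚ) * ((D : ℚ) + 1) ≤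
        ((D : ℚ) + 1) + 2 * ((D : ℚ) + 1) / ((D - 1).factorial : ℚ) * degree D k σ
          + 2 * (facesLen D k σ 1 : ℚ) :=
  large_faces_bounded_general D k hD σ
end
end

section
/- Let D ≥ 3. Every melonic closed graph is connected and has degree zero: if G is obtained from the two-vertex graph (k = 1, all σ_c equal to the identity of Fin 1) by finitely many insertions of fundamental melons on edges, then G is connected and ω(G) = 0. -/
open scoped Classical

noncomputable section

/-- `τ` (on `Fin (k+1)`) is obtained from `σ` (on `Fin k`) by the insertion of a fundamental
melon on the edge of some color `c₀` at some black vertex `i₀`: for `c ≠ c₀` the permutation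
`τ c` agrees with `σ c` on `Fin k` and fixes the new point, while `τ c₀` sends `i₀` to the
new point, the new point to `σ c₀ i₀`, and agrees with `σ c₀` elsewhere. -/
def IsMelonInsertion (D k : ℕ) (σ : Fin (D + 1) → Equiv.Perm (Fin k))
    (τ : Fin (D + 1) → Equiv.Perm (Fin (k + 1))) : Prop :=
  ∃ (c₀ : Fin (D + 1)) (i₀ : Fin k),
    (∀ c : Fin (D + 1), c ≠ c₀ →
      (∀ i : Fin k, τ c i.castSucc = (σ c i).castSucc) ∧ τ c (Fin.last k) = Fin.last k) ∧
    τ c₀ i₀.castSucc = Fin.last k ∧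
    τ c₀ (Fin.last k) = (σ c₀ i₀).castSucc ∧
    ∀ i : Fin k, i ≠ i₀ → τ c₀ i.castSucc = (σ c₀ i).castSucc

/-- The melonic closed graphs: the smallest family of closed bipartite `(D+1)`-colored
graphs containing the two-vertex graph (`k = 1`, all `σ c` the identity of `Fin 1`) and
closed under insertion of fundamental melons on edges. -/
inductive Melonic (D : ℕ) : ∀ k : ℕ, (Fin (D + 1) → Equiv.Perm (Fin k)) → Prop
  | base : Melonic D 1 (fun _ => 1)
  | insert {k : ℕ} {σ : Fin (D + 1) → Equiv.Perm (Fin k)}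
      {τ : Fin (D + 1) → Equiv.Perm (Fin (k + 1))} :
      Melonic D k σ → IsMelonInsertion D k σ τ → Melonic D (k + 1) τ

/-!
Every face count is a number of cycles of a permutation. Inserting a melon on the `c₀`-edge
at `i₀` adds the new vertex as a fixed point of the faces avoiding `c₀` (one new face each)
and splices it into the cycle through `i₀` for the faces using `c₀` (no new face). So each
insertion adds `D.choose 2` faces, `F = D + k · D.choose 2` for melonic graphs, and this is
exactly `ω = 0`.

For connectivity, the new vertex lies in the orbit of `i₀`. Every old generator, extended to
fix the new vertex, is a new generator multiplied on both sides by the identity or by the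
transposition of `i₀` with the new vertex; these move points only within orbits, so the new
orbit of `i₀` contains every old vertex.
-/

open Equiv Equiv.Perm Finset

section NumCycles

variable {k : ℕ}

theorem numCycles_add_card_support (τ : Perm (Fin k)) :
    numCycles τ + #τ.support = Multiset.card τ.cycleType + k := by
  have h := card_filter_add_card_filter_not (s := univ) fun i => τ i = i
  rw [card_univ, Fintype.card_fin] at h
  have hsupp : #τ.support = #{i | ¬τ i = i} := rfl
  rw [numCycles, hsupp]
  omega

theorem numCycles_one : numCycles (1 : Perm (Fin k)) = k := by
  simpa using numCycles_add_card_support (1 : Perm (Fin k))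

theorem Equiv.Perm.IsCycle.numCycles_add_card_support {c : Perm (Fin k)} (hc : c.IsCycle) :
    numCycles c + #c.support = k + 1 := by
  rw [_root_.numCycles_add_card_support, hc.cycleType]
  simp [add_comm]

theorem Equiv.Perm.Disjoint.numCycles_mul {p q : Perm (Fin k)} (h : p.Disjoint q) :
    numCycles (p * q) + k = numCycles p + numCycles q := by
  have hp := numCycles_add_card_support p
  have hq := numCycles_add_card_support q
  have hpq := numCycles_add_card_support (p * q)
  rw [h.cycleType_mul, Multiset.card_add, h.card_support_mul] at hpq
  omega

theorem numCycles_conj (g f : Perm (Fin k)) : numCycles (g * f * g⁻¹) = numCycles f := by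
  have h := numCycles_add_card_support (g * f * g⁻¹)
  rw [cycleType_conj, card_support_conj, ← numCycles_add_card_support] at h
  omega

theorem numCycles_mul_comm (p q : Perm (Fin k)) : numCycles (p * q) = numCycles (q * p) := by
  simpa [mul_assoc] using numCycles_conj p (q * p)

theorem Equiv.Perm.IsCycle.numCycles_swap_mul {c : Perm (Fin k)} (hc : c.IsCycle) {x : Fin k}
    (hx : c x ≠ x) : numCycles (swap x (c x) * c) = numCycles c + 1 := by
  have hcyc := hc.numCycles_add_card_support
  by_cases hccx : c (c x) = x
  · have htwo : #c.support = 2 := by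
      rw [hc.eq_swap_of_apply_apply_eq_self hx hccx, card_support_swap hx.symm]
    have hone : swap x (c x) * c = 1 := by
      rw [mul_eq_one_iff_inv_eq, swap_inv]
      exact (hc.eq_swap_of_apply_apply_eq_self hx hccx).symm
    rw [hone, numCycles_one]
    omega
  · have hsplit := (hc.swap_mul hx hccx).numCycles_add_card_support
    have hx_mem : {x} ⊆ c.support := by simpa using hx
    rw [support_swap_mul_eq c x hccx, card_sdiff_of_subset hx_mem, card_singleton] at hsplit
    have hpos : 1 ≤ #c.support := card_pos.2 ⟨x, mem_support.2 hx⟩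
    omega

theorem numCycles_swap_mul (f : Perm (Fin k)) {x : Fin k} (hx : f x ≠ x) :
    numCycles (swap x (f x) * f) = numCycles f + 1 := by
  set c := f.cycleOf x
  have hdisj : c.Disjoint (f * c⁻¹) :=
    (disjoint_mul_inv_of_mem_cycleFactorsFinset
      (cycleOf_mem_cycleFactorsFinset_iff.2 (mem_support.2 hx))).symm
  have hf : f = c * (f * c⁻¹) := by
    rw [hdisj.commute.eq, inv_mul_cancel_right]
  have hcx : c x = f x := cycleOf_apply_self f x
  have hsplit : (swap x (c x) * c).Disjoint (f * c⁻¹) :=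
    hdisj.mono (fun y hy => (mem_support_swap_mul_imp_mem_support_ne hy).1) le_rfl
  have h₁ := hdisj.numCycles_mul
  have h₂ := hsplit.numCycles_mul
  have h₃ : numCycles (swap x (c x) * c) = numCycles c + 1 :=
    (isCycle_cycleOf f hx).numCycles_swap_mul (by rwa [hcx])
  rw [← hf] at h₁
  rw [mul_assoc, ← hf, hcx] at h₂
  rw [hcx] at h₃
  omega

theorem numCycles_mul_swap_of_apply_eq (f : Perm (Fin k)) {a b : Fin k} (hab : a ≠ b)
    (hb : f b = b) : numCycles (f * swap a b) + 1 = numCycles f := by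
  have hmoved : (f * swap a b) b ≠ b := by
    rw [mul_apply, swap_apply_right]
    exact fun h => hab (f.injective (h.trans hb.symm))
  have hsplit : swap b ((f * swap a b) b) * (f * swap a b) = f := by
    rw [mul_apply, swap_apply_right, ← congrArg (swap · (f a)) hb, swap_apply_apply,
      mul_assoc, mul_assoc, inv_mul_cancel_left, swap_comm, swap_mul_self, mul_one]
  rw [← numCycles_swap_mul _ hmoved, hsplit]

end NumCycles

def extendLast (k : ℕ) : Perm (Fin k) →* Perm (Fin (k + 1)) :=
  extendDomainHom (finSuccAboveEquiv (Fin.last k))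

section ExtendLast

variable {k : ℕ} (ρ : Perm (Fin k))

@[simp]
theorem extendLast_apply_castSucc (i : Fin k) : extendLast k ρ i.castSucc = (ρ i).castSucc := by
  simpa [extendLast, finSuccAboveEquiv_apply] using
    extendDomain_apply_image ρ (finSuccAboveEquiv (Fin.last k)) i

@[simp]
theorem extendLast_apply_last : extendLast k ρ (Fin.last k) = Fin.last k :=
  extendDomain_apply_not_subtype ρ _ (not_not.2 rfl)

theorem numCycles_extendLast : numCycles (extendLast k ρ) = numCycles ρ + 1 := by
  have h := numCycles_add_card_support (extendLast k ρ)
  rw [extendLast, extendDomainHom_apply, cycleType_extendDomain, card_support_extend_domain,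
    ← extendDomainHom_apply, ← extendLast] at h
  have := numCycles_add_card_support ρ
  omega

theorem numCycles_extendLast_mul_swap (i : Fin k) :
    numCycles (extendLast k ρ * swap i.castSucc (Fin.last k)) = numCycles ρ := by
  have h := numCycles_mul_swap_of_apply_eq (extendLast k ρ) (Fin.castSucc_lt_last i).ne
    (extendLast_apply_last ρ)
  rw [numCycles_extendLast] at h
  omega

end ExtendLast

section Melons

variable {D k : ℕ}

/-- The new vertex is `Fin.last k`; precomposing with the transposition reroutes the `c₀`-edge
at `i₀` through it. -/
def insertMelon (σ : Fin (D + 1) → Perm (Fin k)) (c₀ : Fin (D + 1)) (i₀ : Fin k) :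
    Fin (D + 1) → Perm (Fin (k + 1)) :=
  fun c => extendLast k (σ c) * if c = c₀ then swap i₀.castSucc (Fin.last k) else 1

theorem IsMelonInsertion.exists_eq_insertMelon {σ : Fin (D + 1) → Perm (Fin k)}
    {τ : Fin (D + 1) → Perm (Fin (k + 1))} (h : IsMelonInsertion D k σ τ) :
    ∃ c₀ i₀, τ = insertMelon σ c₀ i₀ := by
  obtain ⟨c₀, i₀, hother, hi₀, hlast, hrest⟩ := h
  refine ⟨c₀, i₀, funext fun c => Equiv.ext fun x => ?_⟩
  by_cases hc : c = c₀
  · subst hc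
    induction x using Fin.lastCases with
    | last => simp [insertMelon, hlast]
    | cast i =>
      by_cases hi : i = i₀
      · subst hi
        simp [insertMelon, hi₀]
      · have hne : i.castSucc ≠ i₀.castSucc := Fin.castSucc_injective k |>.ne hi
        simp [insertMelon, hrest i hi, swap_apply_of_ne_of_ne hne (Fin.castSucc_lt_last i).ne]
  · induction x using Fin.lastCases with
    | last => simp [insertMelon, hc, (hother c hc).2]
    | cast i => simp [insertMelon, hc, (hother c hc).1 i]

variable (σ : Fin (D + 1) → Perm (Fin k)) (c₀ : Fin (D + 1)) (i₀ : Fin k)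

theorem faceCount_insertMelon {c₁ c₂ : Fin (D + 1)} (hne : c₁ ≠ c₂) :
    faceCount D (k + 1) (insertMelon σ c₀ i₀) c₁ c₂ =
      faceCount D k σ c₁ c₂ + if c₁ ≠ c₀ ∧ c₂ ≠ c₀ then 1 else 0 := by
  have hext : (extendLast k (σ c₂))⁻¹ * extendLast k (σ c₁) =
      extendLast k ((σ c₂)⁻¹ * σ c₁) := by
    rw [map_mul, map_inv]
  simp only [faceCount, insertMelon]
  by_cases h₁ : c₁ = c₀ <;> by_cases h₂ : c₂ = c₀
  · exact absurd (h₁.trans h₂.symm) hne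
  · rw [if_pos h₁, if_neg h₂, mul_one, ← mul_assoc, hext, numCycles_extendLast_mul_swap]
    simp [h₁]
  · rw [if_neg h₁, if_pos h₂, mul_one, mul_inv_rev, swap_inv, mul_assoc, hext,
      numCycles_mul_comm, numCycles_extendLast_mul_swap]
    simp [h₂]
  · rw [if_neg h₁, if_neg h₂, mul_one, mul_one, hext, numCycles_extendLast]
    simp [h₁, h₂]

theorem totalFaces_insertMelon :
    totalFaces D (k + 1) (insertMelon σ c₀ i₀) = totalFaces D k σ + D.choose 2 := by
  have hpairs : ((univ.filter fun p : Fin (D + 1) × Fin (D + 1) => p.1 < p.2).filter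
      fun p => p.1 ≠ c₀ ∧ p.2 ≠ c₀) = ((univ.erase c₀) ×ˢ (univ.erase c₀)).filter
      fun p => p.1 < p.2 := by
    ext p
    simp only [mem_filter, mem_univ, true_and, mem_product, mem_erase]
    tauto
  rw [totalFaces,
    sum_congr rfl fun p hp => faceCount_insertMelon σ c₀ i₀ (mem_filter.1 hp).2.ne,
    sum_add_distrib, ← card_filter, hpairs, card_product_filter_lt,
    card_erase_of_mem (mem_univ _), card_univ, Fintype.card_fin, Nat.add_sub_cancel, totalFaces]

end Melons

theorem totalFaces_one (D : ℕ) : totalFaces D 1 (fun _ => 1) = (D + 1).choose 2 := by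
  simp [totalFaces, faceCount, numCycles_one, Fintype.card_product_filter_lt]

theorem Melonic.totalFaces_eq {D k : ℕ} {σ : Fin (D + 1) → Perm (Fin k)} (h : Melonic D k σ) :
    totalFaces D k σ = D + k * D.choose 2 := by
  induction h with
  | base => rw [totalFaces_one, Nat.choose_succ_succ', Nat.choose_one_right, one_mul]
  | insert _ hins ih =>
    obtain ⟨c₀, i₀, rfl⟩ := hins.exists_eq_insertMelon
    rw [totalFaces_insertMelon, ih]
    ring

theorem Melonic.degree_eq_zero {D k : ℕ} {σ : Fin (D + 1) → Perm (Fin k)}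
    (h : Melonic D k σ) : degree D k σ = 0 := by
  rw [degree, h.totalFaces_eq]
  push_cast [Nat.cast_choose_two]
  ring

def Setoid.permWithinClasses {α : Type*} (r : Setoid α) : Subgroup (Perm α) where
  carrier := {g | ∀ x, r (g x) x}
  mul_mem' hg hh x := r.trans (hg _) (hh x)
  one_mem' x := r.refl x
  inv_mem' {g} hg x := by simpa using r.symm (hg (g⁻¹ x))

theorem Setoid.swap_mem_permWithinClasses {α : Type*} [DecidableEq α] (r : Setoid α) {a b : α}
    (hab : r a b) : swap a b ∈ r.permWithinClasses := by
  intro x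
  rw [swap_apply_def]
  split_ifs with ha hb
  · exact ha ▸ r.symm hab
  · exact hb ▸ hab
  · exact r.refl x

theorem connected_insertMelon {D k : ℕ} {σ : Fin (D + 1) → Perm (Fin k)}
    (hσ : Connected D k σ) (hD : 1 ≤ D) (c₀ : Fin (D + 1)) (i₀ : Fin k) :
    Connected D (k + 1) (insertMelon σ c₀ i₀) := by
  set τ := insertMelon σ c₀ i₀
  set Γ := Subgroup.closure {g | ∃ c c' : Fin (D + 1), g = (τ c')⁻¹ * τ c}
  set r := MulAction.orbitRel Γ (Fin (k + 1))
  set u : Fin (D + 1) → Perm (Fin (k + 1)) :=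
    fun c => if c = c₀ then swap i₀.castSucc (Fin.last k) else 1
  have hgen (c c' : Fin (D + 1)) : (τ c')⁻¹ * τ c ∈ r.permWithinClasses := fun x =>
    MulAction.mem_orbit x (⟨_, Subgroup.subset_closure ⟨c, c', rfl⟩⟩ : Γ)
  have hlast : r (Fin.last k) i₀.castSucc := by
    have := Fin.nontrivial_iff_two_le.2 (by omega : 2 ≤ D + 1)
    obtain ⟨c₁, hc₁⟩ := exists_ne c₀
    have h := hgen c₀ c₁ i₀.castSucc
    simp only [τ, insertMelon, if_pos, if_neg hc₁, mul_one, ← map_inv, mul_apply,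
      swap_apply_left, extendLast_apply_last] at h
    exact h
  have hu (c : Fin (D + 1)) : u c ∈ r.permWithinClasses := by
    simp only [u]
    split_ifs
    exacts [r.swap_mem_permWithinClasses (r.symm hlast), one_mem _]
  have hext : Subgroup.closure {g | ∃ c c' : Fin (D + 1), g = (σ c')⁻¹ * σ c} ≤
      r.permWithinClasses.comap (extendLast k) := by
    rw [Subgroup.closure_le]
    rintro _ ⟨c, c', rfl⟩
    have hτ (c : Fin (D + 1)) : extendLast k (σ c) = τ c * (u c)⁻¹ :=
      eq_mul_inv_of_mul_eq rfl
    show extendLast k ((σ c')⁻¹ * σ c) ∈ r.permWithinClasses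
    rw [map_mul, map_inv, hτ, hτ]
    simpa [mul_assoc] using mul_mem (mul_mem (hu c') (hgen c c')) (inv_mem (hu c))
  have hall (x : Fin (k + 1)) : r x (Fin.last k) := by
    induction x using Fin.lastCases with
    | last => exact r.refl _
    | cast j =>
      obtain ⟨g, hg, rfl⟩ := hσ i₀ j
      have hj := hext hg i₀.castSucc
      rw [extendLast_apply_castSucc] at hj
      exact r.trans hj (r.symm hlast)
  intro i j
  obtain ⟨⟨g, hg⟩, hgi⟩ := MulAction.orbitRel_apply.1 (r.trans (hall j) (r.symm (hall i)))
  exact ⟨g, hg, hgi⟩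

theorem Melonic.connected {D k : ℕ} {σ : Fin (D + 1) → Perm (Fin k)} (hD : 1 ≤ D)
    (h : Melonic D k σ) : Connected D k σ := by
  induction h with
  | base => exact fun i j => ⟨1, one_mem _, Subsingleton.elim _ _⟩
  | insert _ hins ih =>
    obtain ⟨c₀, i₀, rfl⟩ := hins.exists_eq_insertMelon
    exact connected_insertMelon ih hD c₀ i₀

/-- For `D ≥ 3`, every melonic closed graph is connected and has
degree zero. -/
theorem melonic_connected_degree_zero (D k : ℕ) (hD : 3 ≤ D)
    (σ : Fin (D + 1) → Equiv.Perm (Fin k)) (hmel : Melonic D k σ) :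
    Connected D k σ ∧ degree D k σ = 0 :=
  ⟨hmel.connected (by omega), hmel.degree_eq_zero⟩
end
end

section
/- Let D ≥ 3, k ≥ 1, and let G be a connected closed bipartite (D+1)-colored graph with 2k vertices of degree zero, ω(G) = 0. Then all the D! jackets of G are planar: for every (D+1)-cycle π on the color set, g_π(G) = 0, i.e. Φ_π(G) = 2 + (D−1)·k. -/
open scoped Classical

noncomputable section

/-!
For a cyclic sequence of colours `c₀, …, c_D` the permutations `t_q = σ_{c_q}⁻¹ σ_{c_{q+1}}`
multiply to `1` and, `G` being connected, generate a transitive group. The Riemann–Hurwitz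
inequality `∑_q (k - #cycles t_q) ≥ 2 (k - 1)` then says that the jacket has genus `≥ 0`, i.e.
`Φ ≤ 2 + (D - 1) k`. It is proved by factoring each `t_q` into `k - #cycles t_q` transpositions and
adding them one at a time: a transposition changes the number of cycles of a permutation by
exactly one (by at most one since it glues at most two classes, and not by zero since it flips
the sign), and it can only merge two orbits of the generated group by merging two cycles.

Relabelling the colours by all `ρ ∈ S_{D+1}` hits every ordered pair of distinct colours equally
often, so the mean of the face counts of the relabelled jackets is `2F / D`, which is
`2 + (D - 1) k` exactly when `ω(G) = 0`. Numbers bounded by their mean all equal it.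
-/

open Finset

namespace Setoid

variable {α : Type*}

/-- The join of `r` with the relation `a ~ b`. -/
def glue (r : Setoid α) (a b : α) : Setoid α where
  r x y := r x y ∨ ((r x a ∨ r x b) ∧ (r y a ∨ r y b))
  iseqv := by
    refine ⟨fun x => .inl (r.refl x), fun h => h.imp r.symm And.symm, fun hxy hyz => ?_⟩
    rcases hxy with hxy | ⟨hx, hy⟩ <;> rcases hyz with hyz | ⟨hy', hz⟩
    · exact .inl (r.trans hxy hyz)
    · exact .inr ⟨hy'.imp (r.trans hxy) (r.trans hxy), hz⟩
    · exact .inr ⟨hx, hy.imp (r.trans (r.symm hyz)) (r.trans (r.symm hyz))⟩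
    · exact .inr ⟨hx, hz⟩

variable {r s : Setoid α} {a b : α}

theorem le_glue : r ≤ r.glue a b := fun _ _ h => .inl h

theorem rel_glue_self : r.glue a b a b := .inr ⟨.inl (r.refl a), .inr (r.refl b)⟩

theorem glue_eq_self (hab : r a b) : r.glue a b = r := by
  refine le_antisymm (fun x y h => h.elim id fun ⟨hx, hy⟩ => ?_) le_glue
  have hb : ∀ z, r z a ∨ r z b → r z b := fun z hz => hz.elim (r.trans · hab) id
  exact r.trans (hb x hx) (r.symm (hb y hy))

theorem glue_le_glue (h : s ≤ r.glue a b) : s.glue a b ≤ r.glue a b := by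
  have hab : ∀ z, s z a ∨ s z b → r z a ∨ r z b := by
    rintro z (hz | hz) <;> rcases h hz with hz | ⟨hz, -⟩
    exacts [.inl hz, hz, .inr hz, hz]
  exact fun x y hxy => hxy.elim (h ·) fun ⟨hx, hy⟩ => .inr ⟨hab x hx, hab y hy⟩

theorem map_of_le_surjective (h : r ≤ s) : Function.Surjective (map_of_le h) :=
  fun q => q.inductionOn fun x => ⟨⟦x⟧, rfl⟩

variable [Finite α]

theorem card_quotient_le_of_le (h : r ≤ s) : Nat.card (Quotient s) ≤ Nat.card (Quotient r) :=
  Nat.card_le_card_of_surjective _ (map_of_le_surjective h)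

theorem card_quotient_le_card_quotient_glue_add_one :
    Nat.card (Quotient r) ≤ Nat.card (Quotient (r.glue a b)) + 1 := by
  have := Fintype.ofFinite α
  have hinj : Set.InjOn (map_of_le (le_glue (a := a) (b := b)))
      (univ.erase (⟦b⟧ : Quotient r) : Set (Quotient r)) := by
    intro X hX Y hY hXY
    induction X using Quotient.inductionOn with | h x => ?_
    induction Y using Quotient.inductionOn with | h y => ?_
    have hx : ¬ r x b := fun h => (mem_erase.1 hX).1 (Quotient.sound h)
    have hy : ¬ r y b := fun h => (mem_erase.1 hY).1 (Quotient.sound h)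
    rcases Quotient.exact hXY with hxy | ⟨hx', hy'⟩
    · exact Quotient.sound hxy
    · exact Quotient.sound (r.trans (hx'.resolve_right hx) (r.symm (hy'.resolve_right hy)))
  have := card_le_card_of_injOn _ (fun _ _ => mem_univ _) (t := univ) hinj
  rw [card_erase_of_mem (mem_univ _), card_univ, card_univ] at this
  simp only [Nat.card_eq_fintype_card]
  omega

theorem card_quotient_glue_add_one (hab : ¬ r a b) :
    Nat.card (Quotient (r.glue a b)) + 1 = Nat.card (Quotient r) := by
  have := Fintype.ofFinite α
  have hlt : Nat.card (Quotient (r.glue a b)) < Nat.card (Quotient r) := by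
    simp only [Nat.card_eq_fintype_card]
    refine Fintype.card_lt_of_surjective_not_injective _ (map_of_le_surjective le_glue)
      fun hinj => hab (Quotient.exact ?_)
    exact hinj (Quotient.sound rel_glue_self : (⟦a⟧ : Quotient (r.glue a b)) = ⟦b⟧)
  have := card_quotient_le_card_quotient_glue_add_one (r := r) (a := a) (b := b)
  omega

end Setoid

namespace Equiv.Perm

variable {α : Type*}

theorem SameCycle.setoid_le {f : Perm α} {s : Setoid α} (h : ∀ x, s x (f x)) :
    SameCycle.setoid f ≤ s := by
  rintro x _ ⟨i, rfl⟩
  induction i using Int.induction_on with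
  | zero => exact s.refl x
  | succ i ih => exact s.trans ih (by rw [add_comm, zpow_add, zpow_one, mul_apply]; exact h _)
  | pred i ih =>
    rw [sub_eq_neg_add, zpow_add, zpow_neg_one, mul_apply]
    have := h (f⁻¹ ((f ^ (-(i : ℤ))) x))
    rw [show f (f⁻¹ _) = _ from f.apply_symm_apply _] at this
    exact s.trans ih (s.symm this)

def numOrbits (f : Perm α) : ℕ := Nat.card (Quotient (SameCycle.setoid f))

theorem numOrbits_one : numOrbits (1 : Perm α) = Nat.card α := by
  have : SameCycle.setoid (1 : Perm α) = ⊥ := by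
    ext x y
    exact sameCycle_one
  rw [numOrbits, this, Nat.card_congr Setoid.quotientBotEquiv]

theorem numOrbits_inv (f : Perm α) : numOrbits f⁻¹ = numOrbits f := by
  have : SameCycle.setoid f⁻¹ = SameCycle.setoid f := by
    ext x y
    exact sameCycle_inv
  rw [numOrbits, numOrbits, this]

theorem sameCycle_setoid_swap_mul_le [DecidableEq α] (a b : α) (f : Perm α) :
    SameCycle.setoid (swap a b * f) ≤ (SameCycle.setoid f).glue a b := by
  refine SameCycle.setoid_le fun x => ?_
  have hx : f.SameCycle x (f x) := sameCycle_apply_right.2 (SameCycle.refl f x)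
  rw [mul_apply, swap_apply_def]
  split_ifs with ha hb
  · exact .inr ⟨.inl (ha ▸ hx), .inr (SameCycle.refl f b)⟩
  · exact .inr ⟨.inr (hb ▸ hx), .inl (SameCycle.refl f a)⟩
  · exact .inl hx

section Fintype

variable [Fintype α] [DecidableEq α]

theorem numOrbits_eq (f : Perm α) :
    numOrbits f = Multiset.card f.cycleType + #{x | f x = x} := by
  have hpt (c : f.cycleFactorsFinset) : ∃ x, f x ≠ x ∧ f.cycleOf x = c := by
    obtain ⟨x, hx⟩ := (mem_cycleFactorsFinset_iff.1 c.2).1.nonempty_support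
    exact ⟨x, mem_support.1 (mem_cycleFactorsFinset_support_le c.2 hx),
      (cycle_is_cycleOf hx c.2).symm⟩
  choose pt hpt_moved hpt_cycleOf using hpt
  let e : {x // f x = x} ⊕ f.cycleFactorsFinset → Quotient (SameCycle.setoid f) :=
    Sum.elim (fun x => ⟦x.1⟧) (fun c => ⟦pt c⟧)
  have he : e.Bijective := by
    constructor
    · rintro (⟨x, hx⟩ | c) (⟨y, hy⟩ | d) h <;> replace h : f.SameCycle _ _ := Quotient.exact h
      · obtain rfl := h.eq_of_left hx
        rfl
      · exact absurd (h.eq_of_left hx ▸ hx) (hpt_moved d)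
      · exact absurd (h.symm.eq_of_left hy ▸ hy) (hpt_moved c)
      · simp [Subtype.ext_iff, ← hpt_cycleOf, h.cycleOf_eq]
    · intro q
      induction q using Quotient.inductionOn with | h x => ?_
      by_cases hx : f x = x
      · exact ⟨.inl ⟨x, hx⟩, rfl⟩
      · let c : f.cycleFactorsFinset :=
          ⟨f.cycleOf x, cycleOf_mem_cycleFactorsFinset_iff.2 (mem_support.2 hx)⟩
        refine ⟨.inr c, Quotient.sound ?_⟩
        exact (sameCycle_iff_cycleOf_eq_of_mem_support (mem_support.2 (hpt_moved c))
          (mem_support.2 hx)).2 (hpt_cycleOf c)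
  rw [numOrbits, ← Nat.card_eq_of_bijective e he, Nat.card_sum, cycleType_def,
    Multiset.card_map, add_comm]
  simp [Nat.card_eq_fintype_card, Fintype.card_subtype]

theorem neg_one_pow_numOrbits (f : Perm α) :
    (-1 : ℤˣ) ^ numOrbits f = sign f * (-1) ^ Fintype.card α := by
  have hcard : #{x | f x = x} + f.cycleType.sum = Fintype.card α := by
    rw [sum_cycleType, support]
    exact card_filter_add_card_filter_not _
  rw [numOrbits_eq, sign_of_cycleType, ← hcard]
  have hsq : (-1 : ℤˣ) ^ f.cycleType.sum * (-1) ^ f.cycleType.sum = 1 := by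
    rw [← sq]; exact Int.units_sq _
  simp only [pow_add]
  calc _ = (-1 : ℤˣ) ^ Multiset.card f.cycleType * (-1) ^ #{x | f x = x} *
        ((-1) ^ f.cycleType.sum * (-1) ^ f.cycleType.sum) := by rw [hsq, mul_one]
    _ = _ := by ac_rfl

theorem numOrbits_swap_mul_ne {a b : α} (hab : a ≠ b) (f : Perm α) :
    numOrbits (swap a b * f) ≠ numOrbits f := by
  intro h
  have := neg_one_pow_numOrbits (swap a b * f)
  rw [h, neg_one_pow_numOrbits, sign_mul, sign_swap hab, mul_right_cancel_iff, neg_one_mul] at this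
  exact neg_units_ne_self _ this.symm

theorem numOrbits_swap_mul_le (a b : α) (f : Perm α) :
    numOrbits (swap a b * f) ≤ numOrbits f + 1 := by
  have hf : SameCycle.setoid f ≤ (SameCycle.setoid (swap a b * f)).glue a b := by
    simpa only [swap_mul_self_mul] using sameCycle_setoid_swap_mul_le a b (swap a b * f)
  exact Setoid.card_quotient_le_card_quotient_glue_add_one.trans
    (Nat.add_le_add_right (Setoid.card_quotient_le_of_le hf) 1)

/-- The two `SameCycle` relations glued at `a, b` coincide, and gluing lowers a count by at most
one; the sign rules out equal counts. -/
theorem numOrbits_swap_mul_add_one {a b : α} {f : Perm α} (hab : ¬ f.SameCycle a b) :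
    numOrbits (swap a b * f) + 1 = numOrbits f := by
  set r := SameCycle.setoid f
  set s := SameCycle.setoid (swap a b * f)
  have hr : r ≤ s.glue a b := by
    simpa only [swap_mul_self_mul] using sameCycle_setoid_swap_mul_le a b (swap a b * f)
  have hglue : s.glue a b = r.glue a b :=
    le_antisymm (Setoid.glue_le_glue (sameCycle_setoid_swap_mul_le a b f)) (Setoid.glue_le_glue hr)
  have hcard : Nat.card (Quotient (r.glue a b)) + 1 = numOrbits f :=
    Setoid.card_quotient_glue_add_one hab
  by_cases hs : s a b
  · change Nat.card (Quotient s) + 1 = _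
    rwa [← Setoid.glue_eq_self hs, hglue]
  · have hne : a ≠ b := by
      rintro rfl
      exact hab (SameCycle.refl f a)
    refine absurd ?_ (numOrbits_swap_mul_ne hne f)
    rw [← hcard, ← hglue, Setoid.card_quotient_glue_add_one hs]
    rfl

theorem exists_list_isSwap_prod_eq (f : Perm α) :
    ∃ L : List (Perm α), (∀ s ∈ L, s.IsSwap) ∧ L.prod = f ∧
      L.length + numOrbits f = Nat.card α := by
  induction hn : #f.support using Nat.strong_induction_on generalizing f with | _ n ih =>
  by_cases hf : f = 1
  · subst hf
    exact ⟨[], by simp, rfl, by simp [numOrbits_one]⟩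
  obtain ⟨x, hx⟩ : ∃ x, f x ≠ x := by
    by_contra! h
    exact hf (Equiv.ext h)
  obtain ⟨L, hL, hprod, hlen⟩ :=
    ih _ (hn ▸ card_support_swap_mul hx) (swap x (f x) * f) rfl
  have hsplit : ¬ (swap x (f x) * f).SameCycle x (f x) := fun h =>
    hx (h.eq_of_left (by simp [Function.IsFixedPt])).symm
  have := numOrbits_swap_mul_add_one hsplit
  rw [swap_mul_self_mul] at this
  refine ⟨swap x (f x) :: L, ?_, by rw [List.prod_cons, hprod, swap_mul_self_mul], ?_⟩
  · rintro s (_ | ⟨_, hs⟩)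
    exacts [⟨x, f x, hx.symm, rfl⟩, hL s hs]
  · rw [List.length_cons]
    omega

end Fintype

def orbitSetoid (L : List (Perm α)) : Setoid α :=
  Relation.EqvGen.setoid fun x y => ∃ s ∈ L, s x = y

theorem orbitSetoid_nil : orbitSetoid ([] : List (Perm α)) = ⊥ :=
  le_bot_iff.1 (Setoid.eqvGen_le fun _ _ ⟨_, hs, _⟩ => absurd hs List.not_mem_nil)

theorem orbitSetoid_apply_of_mem_closure {L : List (Perm α)} {g : Perm α}
    (hg : g ∈ Subgroup.closure {s | s ∈ L}) (x : α) : orbitSetoid L x (g x) := by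
  induction hg using Subgroup.closure_induction generalizing x with
  | mem s hs => exact Relation.EqvGen.rel _ _ ⟨s, hs, rfl⟩
  | one => exact (orbitSetoid L).refl x
  | mul g h _ _ hg hh => exact (orbitSetoid L).trans (hh x) (hg (h x))
  | inv g _ hg =>
    have := hg (g⁻¹ x)
    rw [show g (g⁻¹ x) = x from g.apply_symm_apply x] at this
    exact (orbitSetoid L).symm this

theorem sameCycle_setoid_prod_le_orbitSetoid (L : List (Perm α)) :
    SameCycle.setoid L.prod ≤ orbitSetoid L :=
  SameCycle.setoid_le <| orbitSetoid_apply_of_mem_closure <|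
    Subgroup.list_prod_mem _ fun _ hs => Subgroup.subset_closure hs

theorem orbitSetoid_swap_cons [DecidableEq α] (a b : α) (L : List (Perm α)) :
    orbitSetoid (swap a b :: L) = (orbitSetoid L).glue a b := by
  have hmono : orbitSetoid L ≤ orbitSetoid (swap a b :: L) :=
    Setoid.eqvGen_mono fun _ _ ⟨s, hs, h⟩ => ⟨s, List.mem_cons_of_mem _ hs, h⟩
  refine le_antisymm (Setoid.eqvGen_le ?_) fun x y hxy => ?_
  · rintro x _ ⟨s, (_ | ⟨_, hs⟩), rfl⟩
    · rw [swap_apply_def]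
      split_ifs with ha hb
      · exact .inr ⟨.inl (ha ▸ (orbitSetoid L).refl x), .inr ((orbitSetoid L).refl b)⟩
      · exact .inr ⟨.inr (hb ▸ (orbitSetoid L).refl x), .inl ((orbitSetoid L).refl a)⟩
      · exact Setoid.le_glue ((orbitSetoid L).refl x)
    · exact Setoid.le_glue (Relation.EqvGen.rel _ _ ⟨s, hs, rfl⟩)
  · set r := orbitSetoid (swap a b :: L)
    have hab : r a b := Relation.EqvGen.rel _ _ ⟨swap a b, List.mem_cons_self, swap_apply_left a b⟩
    rw [← Setoid.glue_eq_self hab]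
    exact Setoid.glue_le_glue (hmono.trans Setoid.le_glue) hxy

section Fintype

variable [Fintype α] [DecidableEq α]

theorem card_add_numOrbits_prod_le_of_isSwap {L : List (Perm α)} (hL : ∀ s ∈ L, s.IsSwap) :
    Nat.card α + numOrbits L.prod ≤ L.length + 2 * Nat.card (Quotient (orbitSetoid L)) := by
  induction L with
  | nil =>
    rw [List.prod_nil, numOrbits_one, orbitSetoid_nil, Nat.card_congr Setoid.quotientBotEquiv,
      List.length_nil]
    omega
  | cons s L ih =>
    obtain ⟨a, b, -, rfl⟩ := hL s List.mem_cons_self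
    have ih := ih fun t ht => hL t (List.mem_cons_of_mem _ ht)
    rw [List.prod_cons, orbitSetoid_swap_cons, List.length_cons]
    by_cases hab : orbitSetoid L a b
    · have := numOrbits_swap_mul_le a b L.prod
      rw [Setoid.glue_eq_self hab]
      omega
    · have := numOrbits_swap_mul_add_one fun h => hab (sameCycle_setoid_prod_le_orbitSetoid L h)
      have := Setoid.card_quotient_glue_add_one hab
      omega

/-- The Riemann–Hurwitz inequality. -/
theorem card_add_numOrbits_prod_add_sum_le (P : List (Perm α)) :
    Nat.card α + numOrbits P.prod + (P.map numOrbits).sum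
      ≤ P.length * Nat.card α + 2 * Nat.card (Quotient (orbitSetoid P)) := by
  choose F hF_swap hF_prod hF_len using exists_list_isSwap_prod_eq (α := α)
  have hprod : (P.flatMap F).prod = P.prod := by
    simp [List.flatMap, List.prod_flatten, Function.comp_def, hF_prod]
  have hlen : (P.flatMap F).length + (P.map numOrbits).sum = P.length * Nat.card α := by
    rw [List.length_flatMap, ← List.sum_map_add]
    simp [hF_len]
  have hle : orbitSetoid P ≤ orbitSetoid (P.flatMap F) := by
    refine Setoid.eqvGen_le ?_
    rintro x _ ⟨p, hp, rfl⟩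
    refine orbitSetoid_apply_of_mem_closure ?_ x
    rw [← hF_prod p]
    exact Subgroup.list_prod_mem _ fun s hs =>
      Subgroup.subset_closure (List.mem_flatMap.2 ⟨p, hp, hs⟩)
  have := card_add_numOrbits_prod_le_of_isSwap (L := P.flatMap F)
    fun s hs => (List.mem_flatMap.1 hs).elim fun p ⟨_, hs⟩ => hF_swap p s hs
  have := Setoid.card_quotient_le_of_le hle
  rw [hprod] at *
  omega

end Fintype

section Averaging

variable {β M : Type*} [Fintype β] [DecidableEq β] [AddCommMonoid M]

theorem sum_apply_apply_eq {a b c d : β} (hab : a ≠ b) (hcd : c ≠ d) (G : β → β → M) :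
    ∑ ρ : Perm β, G (ρ a) (ρ b) = ∑ ρ : Perm β, G (ρ c) (ρ d) := by
  obtain ⟨μ, hμa, hμb⟩ :=
    MulAction.is_two_pretransitive_iff.1 (isMultiplyPretransitive β 2) hab hcd
  rw [Equiv.Perm.smul_def] at hμa hμb
  rw [← Equiv.sum_comp (Equiv.mulRight μ)]
  simp only [coe_mulRight, mul_apply, hμa, hμb]

theorem card_offDiag_smul_sum_apply_apply {a b : β} (hab : a ≠ b) (G : β → β → M) :
    #(univ : Finset β).offDiag • ∑ ρ : Perm β, G (ρ a) (ρ b)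
      = Fintype.card (Perm β) • ∑ p ∈ (univ : Finset β).offDiag, G p.1 p.2 := by
  calc #(univ : Finset β).offDiag • ∑ ρ : Perm β, G (ρ a) (ρ b)
      = ∑ p ∈ (univ : Finset β).offDiag, ∑ ρ : Perm β, G (ρ p.1) (ρ p.2) := by
        rw [← sum_const]
        exact sum_congr rfl fun p hp => sum_apply_apply_eq hab (mem_offDiag.1 hp).2.2 G
    _ = ∑ ρ : Perm β, ∑ p ∈ (univ : Finset β).offDiag, G (ρ p.1) (ρ p.2) := sum_comm
    _ = ∑ _ρ : Perm β, ∑ p ∈ (univ : Finset β).offDiag, G p.1 p.2 := by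
        refine sum_congr rfl fun ρ _ => (sum_equiv (ρ.prodCongr ρ) (fun p => ?_) fun _ _ => rfl)
        simp
    _ = Fintype.card (Perm β) • ∑ p ∈ (univ : Finset β).offDiag, G p.1 p.2 := by
        rw [sum_const, card_univ]

end Averaging

end Equiv.Perm

open Equiv.Perm

section ColoredGraph

variable {D k : ℕ} (σ : Fin (D + 1) → Equiv.Perm (Fin k))

theorem faceCount_eq_numOrbits (c₁ c₂ : Fin (D + 1)) :
    faceCount D k σ c₁ c₂ = numOrbits ((σ c₂)⁻¹ * σ c₁) :=
  (numOrbits_eq _).symm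

theorem faceCount_comm (c₁ c₂ : Fin (D + 1)) :
    faceCount D k σ c₁ c₂ = faceCount D k σ c₂ c₁ := by
  rw [faceCount_eq_numOrbits, faceCount_eq_numOrbits, ← numOrbits_inv, mul_inv_rev, inv_inv]

theorem sum_offDiag_faceCount :
    ∑ p ∈ (univ : Finset (Fin (D + 1))).offDiag, faceCount D k σ p.1 p.2
      = 2 * totalFaces D k σ := by
  rw [← sum_filter_add_sum_filter_not _ fun p => p.1 < p.2, two_mul, totalFaces]
  congr 1
  · congr 1
    ext p
    simp only [mem_filter, mem_offDiag, mem_univ, true_and, and_iff_right_iff_imp]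
    exact ne_of_lt
  · refine sum_equiv (Equiv.prodComm _ _) (fun p => ?_) fun p _ => faceCount_comm σ p.1 p.2
    simp only [mem_filter, mem_offDiag, mem_univ, true_and, Equiv.prodComm_apply, Prod.fst_swap,
      Prod.snd_swap, not_lt]
    exact ⟨fun h => lt_of_le_of_ne h.2 (Ne.symm h.1), fun h => ⟨h.ne', h.le⟩⟩

theorem two_mul_totalFaces_of_degree_eq_zero (hD : 1 ≤ D) (hω : degree D k σ = 0) :
    2 * totalFaces D k σ = D * (2 + (D - 1) * k) := by
  have hfac : ((D - 1).factorial : ℚ) / 2 ≠ 0 := by positivity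
  have h := (mul_eq_zero.1 hω).resolve_left hfac
  obtain ⟨d, rfl⟩ : ∃ d, D = d + 1 := ⟨D - 1, by omega⟩
  rw [Nat.add_sub_cancel]
  qify
  push_cast at h
  linarith

/-- `jacketFaces D k σ π` is `faceCountAlong σ fun q => (π ^ q) 0`. -/
def faceCountAlong (f : ℕ → Fin (D + 1)) : ℕ :=
  ∑ q ∈ range (D + 1), faceCount D k σ (f q) (f (q + 1))

theorem faceCountAlong_add_two_mul_le (hconn : Connected D k σ) {f : ℕ → Fin (D + 1)}
    (hf : f (D + 1) = f 0) (hsurj : ∀ c, ∃ q < D + 1, f q = c) :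
    faceCountAlong σ f + 2 * k ≤ (D + 1) * k + 2 := by
  set t : ℕ → Equiv.Perm (Fin k) := fun q => (σ (f q))⁻¹ * σ (f (q + 1))
  set P := (List.range (D + 1)).map t
  have hprefix (n : ℕ) : ((List.range n).map t).prod = (σ (f 0))⁻¹ * σ (f n) := by
    induction n with
    | zero => simp
    | succ n ih => simp [List.range_succ, ih, t, mul_assoc]
  have hmem (n : ℕ) (hn : n ≤ D + 1) :
      (σ (f 0))⁻¹ * σ (f n) ∈ Subgroup.closure {s | s ∈ P} := by
    rw [← hprefix]
    refine Subgroup.list_prod_mem _ fun s hs => Subgroup.subset_closure ?_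
    obtain ⟨q, hq, rfl⟩ := List.mem_map.1 hs
    exact List.mem_map.2 ⟨q, List.mem_range.2 (by have := List.mem_range.1 hq; omega), rfl⟩
  have htrans (x y : Fin k) : orbitSetoid P x y := by
    obtain ⟨g, hg, rfl⟩ := hconn x y
    refine orbitSetoid_apply_of_mem_closure ((Subgroup.closure_le _).2 ?_ hg) x
    rintro _ ⟨c, c', rfl⟩
    obtain ⟨i, hi, rfl⟩ := hsurj c
    obtain ⟨j, hj, rfl⟩ := hsurj c'
    simpa [mul_assoc] using mul_mem (inv_mem (hmem j hj.le)) (hmem i hi.le)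
  have hcomp : Nat.card (Quotient (orbitSetoid P)) ≤ 1 :=
    Finite.card_le_one_iff_subsingleton.2
      ⟨fun X Y => Quotient.inductionOn₂ X Y fun x y => Quotient.sound (htrans x y)⟩
  have hsum : (P.map numOrbits).sum = faceCountAlong σ f := by
    rw [faceCountAlong, List.map_map, Finset.sum_eq_multiset_sum, Finset.range_val, Multiset.range,
      Multiset.map_coe, Multiset.sum_coe]
    congr 2
    funext q
    rw [Function.comp_apply, faceCount_eq_numOrbits, ← numOrbits_inv, mul_inv_rev, inv_inv]
  have := card_add_numOrbits_prod_add_sum_le P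
  rw [hprefix, hf, inv_mul_cancel, numOrbits_one, hsum, List.length_map, List.length_range,
    Nat.card_eq_fintype_card, Fintype.card_fin] at this
  linarith

theorem sum_perm_faceCountAlong (hD : 1 ≤ D) (hω : degree D k σ = 0) {f : ℕ → Fin (D + 1)}
    (hf : ∀ q, f q ≠ f (q + 1)) :
    ∑ ρ : Equiv.Perm (Fin (D + 1)), faceCountAlong σ (ρ ∘ f)
      = Fintype.card (Equiv.Perm (Fin (D + 1))) * (2 + (D - 1) * k) := by
  set A := ∑ ρ : Equiv.Perm (Fin (D + 1)), faceCount D k σ (ρ (f 0)) (ρ (f 1))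
  have hA (q : ℕ) : ∑ ρ : Equiv.Perm (Fin (D + 1)), faceCount D k σ (ρ (f q)) (ρ (f (q + 1))) = A :=
    sum_apply_apply_eq (hf q) (hf 0) _
  have hcount := card_offDiag_smul_sum_apply_apply (hf 0) (faceCount D k σ)
  have hoffDiag : #(univ : Finset (Fin (D + 1))).offDiag = D * (D + 1) := by
    rw [offDiag_card, card_univ, Fintype.card_fin, Nat.sub_eq_of_eq_add]
    ring
  rw [sum_offDiag_faceCount, two_mul_totalFaces_of_degree_eq_zero σ hD hω, hoffDiag,
    smul_eq_mul, smul_eq_mul] at hcount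
  have hsum : ∑ ρ : Equiv.Perm (Fin (D + 1)), faceCountAlong σ (ρ ∘ f) = (D + 1) * A := by
    simp only [faceCountAlong, Function.comp_apply]
    rw [sum_comm, sum_congr rfl fun q _ => hA q, sum_const, card_range, smul_eq_mul]
  rw [hsum]
  refine Nat.eq_of_mul_eq_mul_left (show 0 < D by omega) ?_
  calc D * ((D + 1) * A) = D * (D + 1) * A := by ring
    _ = _ := hcount
    _ = _ := by ring

end ColoredGraph

section FullCycle

variable {m : ℕ} {π : Equiv.Perm (Fin m)}

theorem IsFullCycle.apply_ne (hπ : IsFullCycle π) (x : Fin m) : π x ≠ x :=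
  mem_support.1 (hπ.2 ▸ mem_univ x)

theorem IsFullCycle.orderOf_eq (hπ : IsFullCycle π) : orderOf π = m := by
  rw [hπ.1.orderOf, hπ.2, card_univ, Fintype.card_fin]

theorem IsFullCycle.pow_eq_one (hπ : IsFullCycle π) : π ^ m = 1 := by
  simpa only [hπ.orderOf_eq] using pow_orderOf_eq_one π

theorem IsFullCycle.exists_pow_apply_eq (hπ : IsFullCycle π) (x y : Fin m) :
    ∃ q < m, (π ^ q) x = y := by
  obtain ⟨i, rfl⟩ := hπ.1.exists_pow_eq (hπ.apply_ne x) (hπ.apply_ne y)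
  refine ⟨i % m, Nat.mod_lt _ x.pos, ?_⟩
  simpa only [hπ.orderOf_eq] using congrArg (· x) (pow_mod_orderOf π i)

end FullCycle

theorem jacketFaces_eq_of_degree_eq_zero {D k : ℕ} (hD : 1 ≤ D)
    {σ : Fin (D + 1) → Equiv.Perm (Fin k)} (hconn : Connected D k σ) (hω : degree D k σ = 0)
    {π : Equiv.Perm (Fin (D + 1))} (hπ : IsFullCycle π) :
    jacketFaces D k σ π = 2 + (D - 1) * k := by
  set f : ℕ → Fin (D + 1) := fun q => (π ^ q) 0
  have hle (ρ : Equiv.Perm (Fin (D + 1))) : faceCountAlong σ (ρ ∘ f) ≤ 2 + (D - 1) * k := by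
    have := faceCountAlong_add_two_mul_le σ hconn (f := ρ ∘ f) (by simp [f, hπ.pow_eq_one])
      fun c => (hπ.exists_pow_apply_eq 0 (ρ⁻¹ c)).imp fun q ⟨hq, h⟩ =>
        ⟨hq, by simp [f, h]⟩
    obtain ⟨d, rfl⟩ : ∃ d, D = d + 1 := ⟨D - 1, by omega⟩
    rw [Nat.add_sub_cancel]
    linarith
  have hne (q : ℕ) : f q ≠ f (q + 1) := by
    simp only [f, pow_succ', mul_apply]
    exact (hπ.apply_ne _).symm
  have hsum := sum_perm_faceCountAlong σ hD hω hne
  rw [← smul_eq_mul, ← card_univ, ← sum_const] at hsum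
  exact (sum_eq_sum_iff_of_le fun ρ _ => hle ρ).1 hsum 1 (mem_univ _)

theorem degree_zero_jackets_planar_general (D k : ℕ) (hD : 3 ≤ D)
    (σ : Fin (D + 1) → Equiv.Perm (Fin k)) (hconn : Connected D k σ)
    (hω : degree D k σ = 0) :
    ∀ π : Equiv.Perm (Fin (D + 1)), IsFullCycle π →
      jacketGenus D k σ π = 0 ∧ jacketFaces D k σ π = 2 + (D - 1) * k := by
  intro π hπ
  have hfaces := jacketFaces_eq_of_degree_eq_zero (by omega) hconn hω hπ
  refine ⟨?_, hfaces⟩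
  rw [jacketGenus, hfaces]
  push_cast [Nat.cast_sub (by omega : 1 ≤ D)]
  ring

/-- For a connected closed bipartite `(D+1)`-colored graph with `2k`
vertices of degree zero, all the jackets are planar: for every `(D+1)`-cycle `π` on the
colors, `g_π(G) = 0`, i.e. `Φ_π(G) = 2 + (D−1)·k`. -/
theorem degree_zero_jackets_planar (D k : ℕ) (hD : 3 ≤ D) (hk : 1 ≤ k)
    (σ : Fin (D + 1) → Equiv.Perm (Fin k)) (hconn : Connected D k σ)
    (hω : degree D k σ = 0) :
    ∀ π : Equiv.Perm (Fin (D + 1)), IsFullCycle π →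
      jacketGenus D k σ π = 0 ∧ jacketFaces D k σ π = 2 + (D - 1) * k :=
  degree_zero_jackets_planar_general D k hD σ hconn hω
end
end
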